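/- Let d ≥ 5 be an integer and set a = (2(d−4) + √(3(d−4)(d−2)))/3, b = 2√((d−4)/(3(d−2))) + 1, ρ* = √(2a/(b−1)), and U(ρ) = arccos((a − bρ²)/(a + ρ²)). For any T > 0, the function ψ^T(t,r) := U(r/(T−t)) satisfies the co-rotational strong field Skyrme equation in dimension d pointwise at every point (t,r) with 0 ≤ t < T and 0 < r < ρ*·(T−t); in particular it is a solution inside the backward light cone {(t,r) : 0 ≤ t < T, 0 < r ≤ T−t}. -/

import Mathlib

open Real Set

/-- Partial derivative in time. -/
noncomputable def pt (ψ : ℝ → ℝ → ℝ) (t r : ℝ) : ℝ := deriv (fun s => ψ s r) t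

/-- Partial derivative in space. -/
noncomputable def pr (ψ : ℝ → ℝ → ℝ) (t r : ℝ) : ℝ := deriv (fun ρ => ψ t ρ) r

/-- Second partial derivative in time. -/
noncomputable def ptt (ψ : ℝ → ℝ → ℝ) (t r : ℝ) : ℝ := deriv (fun s => pt ψ s r) t

/-- Second partial derivative in space. -/
noncomputable def prr (ψ : ℝ → ℝ → ℝ) (t r : ℝ) : ℝ := deriv (fun ρ => pr ψ t ρ) r

/-- The co-rotational strong field Skyrme equation in dimension `d`, at the point `(t, r)`. -/
def StrongFieldEq (d : ℕ) (ψ : ℝ → ℝ → ℝ) (t r : ℝ) : Prop :=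
  (Real.sin (ψ t r) ^ 2 / r ^ 2) *
      (ptt ψ t r - prr ψ t r - (((d : ℝ) - 3) / r) * pr ψ t r)
    + (Real.sin (2 * ψ t r) / (2 * r ^ 2)) *
        ((pt ψ t r) ^ 2 - (pr ψ t r) ^ 2 + ((d : ℝ) - 2) * Real.sin (ψ t r) ^ 2 / r ^ 2) = 0

noncomputable def Vf (a b : ℝ) (x : ℝ) : ℝ :=
  2*a*(b+1)*x/(a+x^2)^2 / Real.sqrt (1 - ((a - b * x ^ 2) / (a + x ^ 2)) ^ 2)

noncomputable def V2f (a b : ℝ) (x : ℝ) : ℝ :=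
  (2*a*(b+1)*(a-3*x^2)/(a+x^2)^3 * (1 - ((a - b * x ^ 2) / (a + x ^ 2)) ^ 2)
    - (2*a*(b+1)*x/(a+x^2)^2)^2 * ((a - b * x ^ 2) / (a + x ^ 2)))
  / ((1 - ((a - b * x ^ 2) / (a + x ^ 2)) ^ 2) *
      Real.sqrt (1 - ((a - b * x ^ 2) / (a + x ^ 2)) ^ 2))

lemma hasDerivAt_G (a b x : ℝ) (hq : a + x^2 ≠ 0) :
    HasDerivAt (fun y : ℝ => (a - b * y ^ 2) / (a + y ^ 2))
      (-2*a*(b+1)*x/(a+x^2)^2) x := by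
  have h1 : HasDerivAt (fun y : ℝ => a - b * y ^ 2) (-(b * ((2:ℕ) * x ^ 1))) x := by
    exact ((hasDerivAt_pow 2 x).const_mul b).const_sub a
  have h2 : HasDerivAt (fun y : ℝ => a + y ^ 2) ((2:ℕ) * x ^ 1) x :=
    (hasDerivAt_pow 2 x).const_add a
  have h := h1.div h2 hq
  refine h.congr_deriv ?_
  field_simp
  ring

lemma key_bounds {a b x : ℝ} (ha : 0 < a) (hb : 1 < b) (hx : 0 < x)
    (hxa : (b-1)*x^2 < 2*a) :
    -1 < (a - b * x ^ 2) / (a + x ^ 2) ∧ (a - b * x ^ 2) / (a + x ^ 2) < 1 := by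
  have hq : 0 < a + x^2 := by positivity
  constructor
  · rw [lt_div_iff₀ hq]
    nlinarith
  · rw [div_lt_one hq]
    nlinarith

lemma w_pos {a b x : ℝ} (ha : 0 < a) (hb : 1 < b) (hx : 0 < x)
    (hxa : (b-1)*x^2 < 2*a) :
    0 < 1 - ((a - b * x ^ 2) / (a + x ^ 2)) ^ 2 := by
  obtain ⟨h1, h2⟩ := key_bounds ha hb hx hxa
  nlinarith

lemma hasDerivAt_U {a b : ℝ} (ha : 0 < a) (hb : 1 < b) (U : ℝ → ℝ)
    (hU : ∀ ρ : ℝ, U ρ = Real.arccos ((a - b * ρ ^ 2) / (a + ρ ^ 2)))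
    {x : ℝ} (hx : 0 < x) (hxa : (b-1)*x^2 < 2*a) :
    HasDerivAt U (Vf a b x) x := by
  have hq : (0:ℝ) < a + x^2 := by positivity
  obtain ⟨h1, h2⟩ := key_bounds ha hb hx hxa
  have hUe : U = fun ρ => Real.arccos ((a - b * ρ ^ 2) / (a + ρ ^ 2)) := funext hU
  rw [hUe]
  have hg := hasDerivAt_G a b x hq.ne'
  have harc := Real.hasDerivAt_arccos h1.ne' h2.ne
  have h := harc.comp x hg
  simp only [Function.comp_def] at h
  refine h.congr_deriv ?_
  rw [Vf]
  ring

lemma hasDerivAt_Vf {a b : ℝ} (ha : 0 < a) (hb : 1 < b)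
    {x : ℝ} (hx : 0 < x) (hxa : (b-1)*x^2 < 2*a) :
    HasDerivAt (Vf a b) (V2f a b x) x := by
  have hq : (0:ℝ) < a + x^2 := by positivity
  have hw := w_pos ha hb hx hxa
  have hWpos : 0 < Real.sqrt (1 - ((a - b * x ^ 2) / (a + x ^ 2)) ^ 2) :=
    Real.sqrt_pos.mpr hw
  have hWW : Real.sqrt (1 - ((a - b * x ^ 2) / (a + x ^ 2)) ^ 2) ^ 2
      = 1 - ((a - b * x ^ 2) / (a + x ^ 2)) ^ 2 := Real.sq_sqrt hw.le
  have hg := hasDerivAt_G a b x hq.ne'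
  have hnum : HasDerivAt (fun y : ℝ => 2*a*(b+1)*y/(a+y^2)^2)
      ((2*a*(b+1) * (a+x^2)^2 - 2*a*(b+1)*x * ((2:ℕ) * (a+x^2)^1 * ((2:ℕ) * x^1))) / ((a+x^2)^2)^2) x := by
    have ht : HasDerivAt (fun y : ℝ => 2*a*(b+1)*y) (2*a*(b+1)) x := by
      simpa using (hasDerivAt_id x).const_mul (2*a*(b+1))
    have hbot : HasDerivAt (fun y : ℝ => (a+y^2)^2) ((2:ℕ) * (a+x^2)^1 * ((2:ℕ) * x^1)) x :=
      ((hasDerivAt_pow 2 x).const_add a).pow 2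
    exact ht.div hbot (by positivity)
  have hwin : HasDerivAt (fun y : ℝ => 1 - ((a - b * y ^ 2) / (a + y ^ 2)) ^ 2)
      (-((2:ℕ) * ((a - b * x ^ 2) / (a + x ^ 2))^1 * (-2*a*(b+1)*x/(a+x^2)^2))) x :=
    (hg.pow 2).const_sub 1
  have hsq : HasDerivAt (fun y : ℝ => Real.sqrt (1 - ((a - b * y ^ 2) / (a + y ^ 2)) ^ 2))
      (1 / (2 * Real.sqrt (1 - ((a - b * x ^ 2) / (a + x ^ 2)) ^ 2)) *
        (-((2:ℕ) * ((a - b * x ^ 2) / (a + x ^ 2))^1 * (-2*a*(b+1)*x/(a+x^2)^2)))) x := by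
    have h := (Real.hasDerivAt_sqrt hw.ne').comp x hwin
    simpa [Function.comp_def] using h
  have h := hnum.div hsq hWpos.ne'
  have hVeq : Vf a b = fun y : ℝ =>
      2*a*(b+1)*y/(a+y^2)^2 / Real.sqrt (1 - ((a - b * y ^ 2) / (a + y ^ 2)) ^ 2) := rfl
  rw [hVeq]
  refine h.congr_deriv ?_
  rw [V2f]
  set W := Real.sqrt (1 - ((a - b * x ^ 2) / (a + x ^ 2)) ^ 2) with hWdef
  rw [← hWW]
  field_simp
  ring

set_option maxHeartbeats 2000000 in
theorem strong_field_self_similar_solution (d : ℕ) (hd : 5 ≤ d)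
    (a b ρstar : ℝ)
    (ha : a = (2 * ((d : ℝ) - 4) + Real.sqrt (3 * ((d : ℝ) - 4) * ((d : ℝ) - 2))) / 3)
    (hb : b = 2 * Real.sqrt (((d : ℝ) - 4) / (3 * ((d : ℝ) - 2))) + 1)
    (hρstar : ρstar = Real.sqrt (2 * a / (b - 1)))
    (U : ℝ → ℝ) (hU : ∀ ρ : ℝ, U ρ = Real.arccos ((a - b * ρ ^ 2) / (a + ρ ^ 2)))
    (T : ℝ) (hT : 0 < T) :
    ∀ t r : ℝ, 0 ≤ t → t < T → 0 < r → r < ρstar * (T - t) →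
      StrongFieldEq d (fun t r => U (r / (T - t))) t r := by
  -- basic numeric facts
  have hd5 : (5:ℝ) ≤ (d:ℝ) := by exact_mod_cast hd
  have hd4 : (0:ℝ) < (d:ℝ) - 4 := by linarith
  have hd2 : (0:ℝ) < (d:ℝ) - 2 := by linarith
  have hm : (0:ℝ) ≤ 3 * ((d:ℝ) - 4) * ((d:ℝ) - 2) := by nlinarith
  have ha0 : 0 < a := by
    rw [ha]
    have := Real.sqrt_nonneg (3 * ((d:ℝ) - 4) * ((d:ℝ) - 2))
    linarith
  have hb1 : 1 < b := by
    rw [hb]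
    have h0 : 0 < ((d:ℝ) - 4) / (3 * ((d:ℝ) - 2)) := by positivity
    have := Real.sqrt_pos.mpr h0
    linarith
  have hA : (3*a - 2*((d:ℝ)-4))^2 = 3*((d:ℝ)-4)*((d:ℝ)-2) := by
    rw [show 3*a - 2*((d:ℝ)-4) = Real.sqrt (3*((d:ℝ)-4)*((d:ℝ)-2)) by rw [ha]; ring]
    exact Real.sq_sqrt hm
  have hR1 : 3*((d:ℝ)-2)*(b-1) = 6*a - 4*((d:ℝ)-4) := by
    have hsq : Real.sqrt (((d:ℝ)-4)/(3*((d:ℝ)-2)))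
        = Real.sqrt (3*((d:ℝ)-4)*((d:ℝ)-2)) / (3*((d:ℝ)-2)) := by
      rw [show ((d:ℝ)-4)/(3*((d:ℝ)-2)) = (3*((d:ℝ)-4)*((d:ℝ)-2))/(3*((d:ℝ)-2))^2 by
        field_simp]
      rw [Real.sqrt_div hm, Real.sqrt_sq (by linarith : (0:ℝ) ≤ 3*((d:ℝ)-2))]
    rw [hb, hsq, show Real.sqrt (3*((d:ℝ)-4)*((d:ℝ)-2)) = 3*a - 2*((d:ℝ)-4) by
      rw [ha]; ring]
    field_simp
    ring
  have hR2 : ((d:ℝ)-2)*b*(b-1) = 2*a := by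
    have h9 : (9*((d:ℝ)-2)) * (((d:ℝ)-2)*b*(b-1)) = (9*((d:ℝ)-2)) * (2*a) := by
      linear_combination (3*((d:ℝ)-2)*(b-1) + 6*a - 4*((d:ℝ)-4) + 3*((d:ℝ)-2)) * hR1 + 4 * hA
    exact mul_left_cancel₀ (by positivity) h9
  intro t r ht htT hr hrρ
  have hs : 0 < T - t := by linarith
  have hρstar0 : 0 < ρstar := by nlinarith
  have hb10 : b - 1 ≠ 0 := ne_of_gt (by linarith)
  have hρstarsq : (b-1) * ρstar^2 = 2*a := by
    rw [hρstar, Real.sq_sqrt (div_nonneg (by linarith) (by linarith))]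
    field_simp
  have hcond : ∀ x : ℝ, 0 ≤ x → x < ρstar → (b-1)*x^2 < 2*a := by
    intro x h0 hxx
    have hx2 : x^2 < ρstar^2 := by nlinarith
    nlinarith
  -- facts at the point x = r / (T - t)
  have hx0 : 0 < r/(T-t) := div_pos hr hs
  have hxρ : r/(T-t) < ρstar := (div_lt_iff₀ hs).mpr hrρ
  have hcx : (b-1)*(r/(T-t))^2 < 2*a := hcond _ hx0.le hxρ
  have hq : (0:ℝ) < a + (r/(T-t))^2 := by positivity
  obtain ⟨hg1, hg2⟩ := key_bounds ha0 hb1 hx0 hcx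
  have hw : 0 < 1 - ((a - b * (r/(T-t)) ^ 2) / (a + (r/(T-t)) ^ 2)) ^ 2 :=
    w_pos ha0 hb1 hx0 hcx
  -- inner derivative facts
  have hinT : HasDerivAt (fun τ' : ℝ => r/(T-τ')) (r/(T-t)^2) t := by
    have ha' : HasDerivAt (fun τ' : ℝ => T - τ') (-1) t := by
      simpa using (hasDerivAt_id t).const_sub T
    have hb' := (ha'.inv hs.ne').const_mul r
    have heq : (fun τ' : ℝ => r/(T-τ')) = fun τ' : ℝ => r * (T-τ')⁻¹ := by
      funext τ'; rw [div_eq_mul_inv]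
    rw [heq]
    refine hb'.congr_deriv ?_
    field_simp
  have hinR : HasDerivAt (fun y : ℝ => y/(T-t)) (1/(T-t)) r := by
    simpa using (hasDerivAt_id r).div_const (T-t)
  -- the time derivative, as a function of time
  have hptfun : ∀ τ : ℝ, τ < T → r < ρstar*(T-τ) →
      HasDerivAt (fun τ' => U (r/(T-τ'))) (Vf a b (r/(T-τ)) * (r/(T-τ)^2)) τ := by
    intro τ hτ hrτ
    have hsτ : 0 < T - τ := by linarith
    have hin : HasDerivAt (fun τ' : ℝ => r/(T-τ')) (r/(T-τ)^2) τ := by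
      have ha' : HasDerivAt (fun τ' : ℝ => T - τ') (-1) τ := by
        simpa using (hasDerivAt_id τ).const_sub T
      have hb' := (ha'.inv hsτ.ne').const_mul r
      have heq : (fun τ' : ℝ => r/(T-τ')) = fun τ' : ℝ => r * (T-τ')⁻¹ := by
        funext τ'; rw [div_eq_mul_inv]
      rw [heq]
      refine hb'.congr_deriv ?_
      field_simp
    have hy0 : 0 < r/(T-τ) := div_pos hr hsτ
    have hyρ : r/(T-τ) < ρstar := (div_lt_iff₀ hsτ).mpr hrτ
    simpa [Function.comp_def] using
      (hasDerivAt_U ha0 hb1 U hU hy0 (hcond _ hy0.le hyρ)).comp τ hin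
  -- the space derivative, as a function of space
  have hprfun : ∀ y : ℝ, 0 < y → y < ρstar*(T-t) →
      HasDerivAt (fun y' => U (y'/(T-t))) (Vf a b (y/(T-t)) * (1/(T-t))) y := by
    intro y hy1 hy2
    have h1 : HasDerivAt (fun y' : ℝ => y'/(T-t)) (1/(T-t)) y := by
      simpa using (hasDerivAt_id y).div_const (T-t)
    have hy0 : 0 < y/(T-t) := div_pos hy1 hs
    have hyρ : y/(T-t) < ρstar := (div_lt_iff₀ hs).mpr hy2
    simpa [Function.comp_def] using
      (hasDerivAt_U ha0 hb1 U hU hy0 (hcond _ hy0.le hyρ)).comp y h1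
  -- values of the four derivatives
  have hPT : pt (fun t r => U (r / (T - t))) t r = Vf a b (r/(T-t)) * (r/(T-t)^2) := by
    simp only [pt]
    exact (hptfun t htT hrρ).deriv
  have hPR : pr (fun t r => U (r / (T - t))) t r = Vf a b (r/(T-t)) * (1/(T-t)) := by
    simp only [pr]
    exact (hprfun r hr hrρ).deriv
  have hptev : (fun τ => pt (fun t r => U (r / (T - t))) τ r)
      =ᶠ[nhds t] fun τ => Vf a b (r/(T-τ)) * (r/(T-τ)^2) := by
    have h1 : ∀ᶠ τ in nhds t, τ < T := eventually_lt_nhds htT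
    have h2 : ∀ᶠ τ in nhds t, r < ρstar*(T-τ) := by
      have hc : ContinuousAt (fun τ : ℝ => ρstar*(T-τ)) t := by fun_prop
      exact continuousAt_const.eventually_lt hc hrρ
    filter_upwards [h1, h2] with τ hτ1 hτ2
    simp only [pt]
    exact (hptfun τ hτ1 hτ2).deriv
  have hPTT : ptt (fun t r => U (r / (T - t))) t r
      = V2f a b (r/(T-t)) * (r/(T-t)^2) * (r/(T-t)^2) + Vf a b (r/(T-t)) * (2*r/(T-t)^3) := by
    simp only [ptt]
    rw [hptev.deriv_eq]
    have h1 : HasDerivAt (fun τ => Vf a b (r/(T-τ))) (V2f a b (r/(T-t)) * (r/(T-t)^2)) t := by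
      simpa [Function.comp_def] using (hasDerivAt_Vf ha0 hb1 hx0 hcx).comp t hinT
    have h2 : HasDerivAt (fun τ : ℝ => r/(T-τ)^2) (2*r/(T-t)^3) t := by
      have ha' : HasDerivAt (fun τ' : ℝ => T - τ') (-1) t := by
        simpa using (hasDerivAt_id t).const_sub T
      have hb' : HasDerivAt (fun τ' : ℝ => (T-τ')^2) ((2:ℕ)*(T-t)^1*(-1)) t := ha'.pow 2
      have hc' := (hb'.inv (by positivity)).const_mul r
      have heq : (fun τ' : ℝ => r/(T-τ')^2) = fun τ' : ℝ => r * ((T-τ')^2)⁻¹ := by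
        funext τ'; rw [div_eq_mul_inv]
      rw [heq]
      refine hc'.congr_deriv ?_
      field_simp
      ring
    have h3 := h1.mul h2
    exact h3.deriv
  have hprev : (fun y => pr (fun t r => U (r / (T - t))) t y)
      =ᶠ[nhds r] fun y => Vf a b (y/(T-t)) * (1/(T-t)) := by
    filter_upwards [eventually_gt_nhds hr, eventually_lt_nhds hrρ] with y h1 h2
    simp only [pr]
    exact (hprfun y h1 h2).deriv
  have hPRR : prr (fun t r => U (r / (T - t))) t r
      = V2f a b (r/(T-t)) * (1/(T-t)) * (1/(T-t)) := by
    simp only [prr]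
    rw [hprev.deriv_eq]
    have h1 : HasDerivAt (fun y => Vf a b (y/(T-t))) (V2f a b (r/(T-t)) * (1/(T-t))) r := by
      simpa [Function.comp_def] using (hasDerivAt_Vf ha0 hb1 hx0 hcx).comp r hinR
    exact (h1.mul_const (1/(T-t))).deriv
  -- trig values
  have hsin : Real.sin (U (r/(T-t)))
      = Real.sqrt (1 - ((a - b * (r/(T-t)) ^ 2) / (a + (r/(T-t)) ^ 2)) ^ 2) := by
    rw [hU, Real.sin_arccos]
  have hsin2 : Real.sin (2 * U (r/(T-t)))
      = 2 * ((a - b * (r/(T-t)) ^ 2) / (a + (r/(T-t)) ^ 2)) *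
        Real.sqrt (1 - ((a - b * (r/(T-t)) ^ 2) / (a + (r/(T-t)) ^ 2)) ^ 2) := by
    rw [hU, Real.sin_two_mul, Real.sin_arccos, Real.cos_arccos hg1.le hg2.le]
    ring
  -- assemble
  simp only [StrongFieldEq]
  rw [hPTT, hPRR, hPT, hPR, hsin2, hsin]
  simp only [Vf, V2f]
  set x := r / (T - t) with hxdef
  have hrxu : r = x * (T - t) := by rw [hxdef]; field_simp
  rw [hrxu]
  set u := T - t with hudef
  have hu0 : 0 < u := hs
  set W := Real.sqrt (1 - ((a - b * x ^ 2) / (a + x ^ 2)) ^ 2) with hWdef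
  have hWpos : 0 < W := by rw [hWdef]; exact Real.sqrt_pos.mpr hw
  have hWW : W ^ 2 = 1 - ((a - b * x ^ 2) / (a + x ^ 2)) ^ 2 := by
    rw [hWdef]; exact Real.sq_sqrt hw.le
  have hW2fac : W ^ 2 = (b+1)*x^2*(2*a-(b-1)*x^2)/(a+x^2)^2 := by
    rw [hWW]; field_simp; ring
  rw [← hWW]
  set g := (a - b * x ^ 2) / (a + x ^ 2) with hgdef
  set p := 2*a*(b+1)*x/(a+x^2)^2 with hpdef
  set p2 := 2*a*(b+1)*(a-3*x^2)/(a+x^2)^3 with hp2def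
  have hP' : 2*a*(x^2-1)*(a-3*x^2) + 2*a*(2*x^2-(d:ℝ)+3)*(a+x^2)
      + ((d:ℝ)-2)*(a-b*x^2)*(2*a-(b-1)*x^2) = 0 := by
    linear_combination x^4 * hR2 - a*x^2 * hR1
  have hx0' : x ≠ 0 := ne_of_gt hx0
  have hq' : a + x^2 ≠ 0 := ne_of_gt hq
  have hfac2 : 2*a*(b+1)*(a-3*x^2)/(a+x^2)^3 * ((b+1)*x^2*(2*a-(b-1)*x^2)/(a+x^2)^2) * (x^2-1)
      + (b+1)*x^2*(2*a-(b-1)*x^2)/(a+x^2)^2 * (2*a*(b+1)*x/(a+x^2)^2) * (2*x - ((d:ℝ)-3)/x)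
      + ((d:ℝ)-2) * ((a - b * x ^ 2) / (a + x ^ 2)) * ((b+1)*x^2*(2*a-(b-1)*x^2)/(a+x^2)^2)^2 / x^2
      = ((b+1)^2*x^2*(2*a-(b-1)*x^2)/(a+x^2)^5) *
        (2*a*(x^2-1)*(a-3*x^2) + 2*a*(2*x^2-(d:ℝ)+3)*(a+x^2)
          + ((d:ℝ)-2)*(a-b*x^2)*(2*a-(b-1)*x^2)) := by
    field_simp
    ring
  have hE : p2 * W^2 * (x^2-1) + W^2 * p * (2*x - ((d:ℝ)-3)/x)
      + ((d:ℝ)-2) * g * (W^2)^2 / x^2 = 0 := by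
    rw [hp2def, hpdef, hgdef, hW2fac]
    rw [hfac2, hP', mul_zero]
  have h0 : (p2 * W^2 * (x^2-1) + W^2 * p * (2*x - ((d:ℝ)-3)/x)
      + ((d:ℝ)-2) * g * (W^2)^2 / x^2) / (x^2*u^4*W) = 0 := by
    rw [hE]; exact zero_div _
  refine Eq.trans ?_ h0
  field_simp
  ring
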